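/- Fix an integer ℓ ≥ 2, a vector α ∈ ℝ^ℓ with α_j > 0 for all j and ∑_{j=1}^ℓ α_j = 1, and positive reals ω_1, …, ω_ℓ. For every p ∈ S^{ℓ−1}_{++} and every vector v ∈ ℝ^ℓ with ⟨p, v⟩ = 0, there exist strictly positive reals μ_1, …, μ_ℓ such that v = ∑_{i=1}^ℓ μ_i z_i^{CD}(p). That is, the vectors z_1^{CD}(p), …, z_ℓ^{CD}(p) positively span the tangent hyperplane {v ∈ ℝ^ℓ : ⟨p, v⟩ = 0}. -/

import Mathlib

open Finset

/-- The individual excess demand of the `i`-th Cobb–Douglas consumer, with exponents `α`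
and endowment `ω i` in good `i`. -/
noncomputable def zCD {ℓ : ℕ} (α ω : Fin ℓ → ℝ) (i : Fin ℓ) (p : Fin ℓ → ℝ) :
    Fin ℓ → ℝ :=
  fun j => if j = i then -(1 - α i) * ω i else α j * (p i / p j) * ω i

/-!
Writing `a j = α j / p j`, each excess demand is `zCD α ω i p = ω i • (p i • a - e i)`, and
`⟨p, a⟩ = ∑ α j = 1`. Hence for any weights `c`, `∑ c i • (p i • a - e i) = ⟨c, p⟩ • a - c`.
Given `v ⊥ p`, take `c = S • a - v` with `S` so large that `c > 0`; then `⟨c, p⟩ = S`, so the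
combination is exactly `v`, and `μ i = c i / ω i` are the required coefficients.
-/

section PositiveSpan

variable {ι : Type*} [Fintype ι] [DecidableEq ι]

theorem sum_smul_smul_sub_single (a p c : ι → ℝ) :
    ∑ i, c i • (p i • a - Pi.single i 1) = (∑ i, c i * p i) • a - c := by
  ext j
  simp only [Finset.sum_apply, Pi.smul_apply, Pi.sub_apply, smul_eq_mul, Pi.single_apply,
    mul_sub, Finset.sum_sub_distrib, Finset.sum_mul, mul_ite, mul_one, mul_zero,
    Finset.sum_ite_eq, Finset.mem_univ, if_true]
  simp only [mul_assoc]

theorem exists_pos_sum_smul_smul_sub_single_eq (a p v : ι → ℝ) (ha : ∀ i, 0 < a i)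
    (hpa : ∑ i, p i * a i = 1) (hpv : ∑ i, p i * v i = 0) :
    ∃ c : ι → ℝ, (∀ i, 0 < c i) ∧ v = ∑ i, c i • (p i • a - Pi.single i 1) := by
  obtain ⟨M, hM⟩ := Finite.bddAbove_range fun i => v i / a i
  set S := M + 1
  have hvS : ∀ i, v i < S * a i := fun i =>
    (div_lt_iff₀ (ha i)).mp ((hM (Set.mem_range_self i)).trans_lt (lt_add_one M))
  have hcp : ∑ i, (S * a i - v i) * p i = S := by
    calc ∑ i, (S * a i - v i) * p i = S * ∑ i, p i * a i - ∑ i, p i * v i := by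
          simp only [sub_mul, Finset.sum_sub_distrib, Finset.mul_sum]
          congr 1 <;> exact Finset.sum_congr rfl fun i _ => by ring
      _ = S := by rw [hpa, hpv, mul_one, sub_zero]
  refine ⟨fun i => S * a i - v i, fun i => sub_pos.mpr (hvS i), ?_⟩
  rw [sum_smul_smul_sub_single, hcp]
  ext j
  simp

end PositiveSpan

theorem zCD_eq_smul {ℓ : ℕ} (α ω : Fin ℓ → ℝ) (i : Fin ℓ) {p : Fin ℓ → ℝ} (hp : p i ≠ 0) :
    zCD α ω i p = ω i • (p i • (fun j => α j / p j) - Pi.single i 1) := by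
  ext j
  rcases eq_or_ne j i with rfl | hji
  · simp only [zCD, ↓reduceIte, Pi.smul_apply, Pi.sub_apply, smul_eq_mul, Pi.single_eq_same]
    field_simp
    ring
  · simp only [zCD, hji, ↓reduceIte, Pi.smul_apply, Pi.sub_apply, smul_eq_mul,
      Pi.single_eq_of_ne hji, sub_zero]
    ring

theorem zCD_positively_spans_tangent_hyperplane_general
    (ℓ : ℕ)
    (α : Fin ℓ → ℝ) (hα : ∀ j, 0 < α j) (hαsum : ∑ j, α j = 1)
    (ω : Fin ℓ → ℝ) (hω : ∀ j, 0 < ω j) :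
    ∀ p : Fin ℓ → ℝ, (∀ j, 0 < p j) → ∑ j, (p j) ^ 2 = 1 →
      ∀ v : Fin ℓ → ℝ, (∑ j, p j * v j = 0) →
        ∃ μ : Fin ℓ → ℝ, (∀ i, 0 < μ i) ∧ v = ∑ i, μ i • zCD α ω i p := by
  intro p hp _ v hv
  have hpa : ∑ j, p j * (α j / p j) = 1 := by
    rw [← hαsum]
    exact Finset.sum_congr rfl fun j _ => mul_div_cancel₀ _ (hp j).ne'
  obtain ⟨c, hc, rfl⟩ := exists_pos_sum_smul_smul_sub_single_eq _ p v
    (fun j => div_pos (hα j) (hp j)) hpa hv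
  refine ⟨fun i => c i / ω i, fun i => div_pos (hc i) (hω i), ?_⟩
  refine Finset.sum_congr rfl fun i _ => ?_
  rw [zCD_eq_smul α ω i (hp i).ne', smul_smul, div_mul_cancel₀ _ (hω i).ne']

/-- for every `p` in the positive part of the unit sphere, the vectors
`zCD α ω 1 p, …, zCD α ω ℓ p` positively span the tangent hyperplane
`{v | ⟨p, v⟩ = 0}`: every such `v` is a linear combination of them with strictly
positive coefficients. -/
theorem zCD_positively_spans_tangent_hyperplane
    (ℓ : ℕ) (hℓ : 2 ≤ ℓ)
    (α : Fin ℓ → ℝ) (hα : ∀ j, 0 < α j) (hαsum : ∑ j, α j = 1)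
    (ω : Fin ℓ → ℝ) (hω : ∀ j, 0 < ω j) :
    ∀ p : Fin ℓ → ℝ, (∀ j, 0 < p j) → ∑ j, (p j) ^ 2 = 1 →
      ∀ v : Fin ℓ → ℝ, (∑ j, p j * v j = 0) →
        ∃ μ : Fin ℓ → ℝ, (∀ i, 0 < μ i) ∧ v = ∑ i, μ i • zCD α ω i p :=
  zCD_positively_spans_tangent_hyperplane_general ℓ α hα hαsum ω hω
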